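/- arXiv:1306.4543 — 3 statements merged into one kernel-verified Lean document; each statement's English description precedes it below -/
import Mathlib

section
/- Let S be a nontrivial idempotent semigroup (a band with at least two elements). Then the set M = {(p₁, p₂, p₃) ∈ S³ | p₁ = p₂ or p₁ = p₃} is not an algebraic set over S; that is, there is no set Σ of equations in three variables over the language {·} whose solution set in S³ equals M. -/
/-!
Solution sets of equations are closed under polymorphisms: if `φ : T × T → T` is a semigroup
homomorphism and `p`, `q` satisfy an equation, so does `i ↦ φ (p i, q i)`. They also restrict
to subsemigroups. A nontrivial band contains a two-element subsemigroup, which is a semilattice,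
a left zero or a right zero semigroup, and each of these has a binary polymorphism carrying two
points of `{p | p 0 = p 1 ∨ p 0 = p 2}` to a point outside it.
-/

/-- A point `p : Fin n → S` satisfies the equation `(τ, σ)` if the evaluations of the two
terms (elements of the free semigroup on `n` generators) at `p` coincide. -/
def SatisfiesEquation {S : Type*} [Semigroup S] {n : ℕ}
    (e : FreeSemigroup (Fin n) × FreeSemigroup (Fin n)) (p : Fin n → S) : Prop :=
  FreeSemigroup.lift p e.1 = FreeSemigroup.lift p e.2

/-- A set `Y ⊆ Sⁿ` is algebraic over `S` if it is the common solution set of some set of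
equations in `n` variables over the language `{·}`. -/
def IsAlgebraicSet {S : Type*} [Semigroup S] {n : ℕ} (Y : Set (Fin n → S)) : Prop :=
  ∃ Eqs : Set (FreeSemigroup (Fin n) × FreeSemigroup (Fin n)),
    Y = {p | ∀ e ∈ Eqs, SatisfiesEquation e p}

open Function

def LeftZero (α : Type*) : Type _ := α

instance (α : Type*) : Semigroup (LeftZero α) where
  mul x _ := x
  mul_assoc _ _ _ := rfl

def RightZero (α : Type*) : Type _ := α

instance (α : Type*) : Semigroup (RightZero α) where
  mul _ y := y
  mul_assoc _ _ _ := rfl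

def LeftZero.mulHom {α S : Type*} [Mul S] (f : α → S) (hf : ∀ i j, f i * f j = f i) :
    LeftZero α →ₙ* S :=
  ⟨f, fun i j => (hf i j).symm⟩

def RightZero.mulHom {α S : Type*} [Mul S] (f : α → S) (hf : ∀ i j, f i * f j = f j) :
    RightZero α →ₙ* S :=
  ⟨f, fun i j => (hf i j).symm⟩

section Equations

variable {S T : Type*} [Semigroup S] [Semigroup T] {n : ℕ}

theorem FreeSemigroup.lift_comp {α : Type*} (g : S →ₙ* T) (p : α → S) :
    lift (g ∘ p) = g.comp (lift p) :=
  hom_ext rfl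

theorem FreeSemigroup.lift_prodMk {α : Type*} (p : α → S) (q : α → T) :
    lift (fun i => (p i, q i)) = (lift p).prod (lift q) :=
  hom_ext rfl

variable {e : FreeSemigroup (Fin n) × FreeSemigroup (Fin n)}

theorem SatisfiesEquation.comp {p : Fin n → S} (g : S →ₙ* T) (h : SatisfiesEquation e p) :
    SatisfiesEquation e (g ∘ p) := by
  simp only [SatisfiesEquation, FreeSemigroup.lift_comp, MulHom.comp_apply] at h ⊢
  rw [h]

theorem satisfiesEquation_comp_iff {g : S →ₙ* T} (hg : Injective g) {p : Fin n → S} :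
    SatisfiesEquation e (g ∘ p) ↔ SatisfiesEquation e p := by
  simp only [SatisfiesEquation, FreeSemigroup.lift_comp, MulHom.comp_apply, hg.eq_iff]

theorem SatisfiesEquation.prodMk {p : Fin n → S} {q : Fin n → T} (hp : SatisfiesEquation e p)
    (hq : SatisfiesEquation e q) : SatisfiesEquation e (fun i => (p i, q i)) := by
  simp only [SatisfiesEquation, FreeSemigroup.lift_prodMk, MulHom.prod_apply] at hp hq ⊢
  rw [hp, hq]

theorem IsAlgebraicSet.preimage_comp {g : T →ₙ* S} (hg : Injective g) {Y : Set (Fin n → S)}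
    (hY : IsAlgebraicSet Y) : IsAlgebraicSet {p : Fin n → T | g ∘ p ∈ Y} := by
  obtain ⟨Eqs, rfl⟩ := hY
  exact ⟨Eqs, by ext p; simp [satisfiesEquation_comp_iff hg]⟩

theorem IsAlgebraicSet.map_prodMk_mem {Y : Set (Fin n → T)} (hY : IsAlgebraicSet Y)
    (φ : T × T →ₙ* T) {p q : Fin n → T} (hp : p ∈ Y) (hq : q ∈ Y) :
    (fun i => φ (p i, q i)) ∈ Y := by
  obtain ⟨Eqs, rfl⟩ := hY
  exact fun e he => ((hp e he).prodMk (hq e he)).comp φ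

end Equations

def diagonalUnion (S : Type*) : Set (Fin 3 → S) := {p | p 0 = p 1 ∨ p 0 = p 2}

section DiagonalUnion

variable {S T : Type*} [Semigroup S] [Semigroup T]

theorem not_isAlgebraicSet_diagonalUnion_of_injective {g : T →ₙ* S} (hg : Injective g)
    (hT : ¬ IsAlgebraicSet (diagonalUnion T)) : ¬ IsAlgebraicSet (diagonalUnion S) := by
  intro hS
  have hpre : {p : Fin 3 → T | g ∘ p ∈ diagonalUnion S} = diagonalUnion T := by
    ext p
    simp [diagonalUnion, hg.eq_iff]
  exact hT (hpre ▸ hS.preimage_comp hg)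

theorem not_isAlgebraicSet_diagonalUnion_of_polymorphism (φ : T × T →ₙ* T) (u v : T)
    (h₁ : φ (u, u) ≠ φ (u, v)) (h₂ : φ (u, u) ≠ φ (v, u)) :
    ¬ IsAlgebraicSet (diagonalUnion T) := by
  intro hT
  have hr := hT.map_prodMk_mem φ (p := ![u, u, v]) (q := ![u, v, u]) (Or.inl rfl) (Or.inr rfl)
  rcases hr with h | h
  exacts [h₁ h, h₂ h]

theorem not_isAlgebraicSet_diagonalUnion_of_semilattice_pair {x y : S} (hne : x ≠ y)
    (hx : x * x = x) (hy : y * y = y) (hxy : x * y = y) (hyx : y * x = y) :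
    ¬ IsAlgebraicSet (diagonalUnion S) := by
  let g : Fin 2 →ₙ* S := ⟨![y, x], by intro i j; fin_cases i <;> fin_cases j <;> simp [*]⟩
  refine not_isAlgebraicSet_diagonalUnion_of_injective (g := g) ?_ ?_
  · exact injective_pair_iff_ne.mpr hne.symm
  · exact not_isAlgebraicSet_diagonalUnion_of_polymorphism mulMulHom 1 0 (by decide) (by decide)

theorem not_isAlgebraicSet_diagonalUnion_of_leftZero_pair {x y : S} (hne : x ≠ y)
    (hx : x * x = x) (hy : y * y = y) (hxy : x * y = x) (hyx : y * x = y) :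
    ¬ IsAlgebraicSet (diagonalUnion S) := by
  let g := LeftZero.mulHom ![x, y] (by intro i j; fin_cases i <;> fin_cases j <;> simp [*])
  refine not_isAlgebraicSet_diagonalUnion_of_injective (g := g) ?_ ?_
  · exact injective_pair_iff_ne.mpr hne
  · exact not_isAlgebraicSet_diagonalUnion_of_polymorphism
      ⟨fun z => max (α := Fin 2) z.1 z.2, fun _ _ => rfl⟩ (0 : Fin 2) (1 : Fin 2)
      Fin.zero_ne_one Fin.zero_ne_one

theorem not_isAlgebraicSet_diagonalUnion_of_rightZero_pair {x y : S} (hne : x ≠ y)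
    (hx : x * x = x) (hy : y * y = y) (hxy : x * y = y) (hyx : y * x = x) :
    ¬ IsAlgebraicSet (diagonalUnion S) := by
  let g := RightZero.mulHom ![x, y] (by intro i j; fin_cases i <;> fin_cases j <;> simp [*])
  refine not_isAlgebraicSet_diagonalUnion_of_injective (g := g) ?_ ?_
  · exact injective_pair_iff_ne.mpr hne
  · exact not_isAlgebraicSet_diagonalUnion_of_polymorphism
      ⟨fun z => max (α := Fin 2) z.1 z.2, fun _ _ => rfl⟩ (0 : Fin 2) (1 : Fin 2)
      Fin.zero_ne_one Fin.zero_ne_one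

end DiagonalUnion

theorem exists_semilattice_or_leftZero_or_rightZero_pair {S : Type*} [Semigroup S] [Nontrivial S]
    (hband : ∀ x : S, x * x = x) :
    (∃ x y : S, x ≠ y ∧ x * y = y ∧ y * x = y) ∨ (∃ x y : S, x ≠ y ∧ x * y = x ∧ y * x = y) ∨
      (∃ x y : S, x ≠ y ∧ x * y = y ∧ y * x = x) := by
  have hband_left (x y : S) : x * (x * y) = x * y := by rw [← mul_assoc, hband]
  obtain ⟨a, b, hne⟩ := exists_pair_ne S
  by_cases haba : a * b * a = a
  · by_cases hbab : b * a * b = b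
    · by_cases hab : a * b = a
      · have hba : b * a = b := by rw [← hab, ← mul_assoc, hbab]
        exact Or.inr (Or.inl ⟨a, b, hne, hab, hba⟩)
      · exact Or.inr (Or.inr ⟨a, a * b, Ne.symm hab, by rw [← mul_assoc, hband], haba⟩)
    · refine Or.inl ⟨b, b * a * b, Ne.symm hbab, ?_, ?_⟩ <;> simp only [mul_assoc, hband, hband_left]
  · refine Or.inl ⟨a, a * b * a, Ne.symm haba, ?_, ?_⟩ <;> simp only [mul_assoc, hband, hband_left]

theorem not_algebraic_of_band {S : Type*} [Semigroup S] [Nontrivial S]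
    (hband : ∀ x : S, x * x = x) :
    ¬ IsAlgebraicSet {p : Fin 3 → S | p 0 = p 1 ∨ p 0 = p 2} := by
  rcases exists_semilattice_or_leftZero_or_rightZero_pair hband with
    ⟨x, y, hne, hxy, hyx⟩ | ⟨x, y, hne, hxy, hyx⟩ | ⟨x, y, hne, hxy, hyx⟩
  · exact not_isAlgebraicSet_diagonalUnion_of_semilattice_pair hne (hband x) (hband y) hxy hyx
  · exact not_isAlgebraicSet_diagonalUnion_of_leftZero_pair hne (hband x) (hband y) hxy hyx
  · exact not_isAlgebraicSet_diagonalUnion_of_rightZero_pair hne (hband x) (hband y) hxy hyx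
end

section
/- Let S be a semigroup satisfying the identity x² = x³ for all x ∈ S, and suppose S is not idempotent (i.e., there exists a ∈ S with a·a ≠ a). Then the set M = {(p₁, p₂, p₃) ∈ S³ | p₁ = p₂ or p₁ = p₃} is not an algebraic set over S. -/
/-!
Take `a` with `a² ≠ a` and put `b = a²`. Since `x² = x³`, every product of two elements of
`{a, b}` is `b`, so a term evaluated at a point with coordinates in `{a, b}` is `b` unless the
term is a single variable. Hence at `p = (a, a, b)`, `q = (a, b, a)` and `r = (a, b, b)` the
value of every term at `r` is a function of its values at `p` and `q`: whatever equation `p`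
and `q` both satisfy, `r` satisfies too. But `p` and `q` lie in the set and `r` does not.
-/

open FreeSemigroup

theorem IsAlgebraicSet.mem_of_lift_eq {S : Type*} [Semigroup S] {n : ℕ} {Y : Set (Fin n → S)}
    (hY : IsAlgebraicSet Y) {p q r : Fin n → S} (hp : p ∈ Y) (hq : q ∈ Y) (G : S → S → S)
    (hG : ∀ w, lift r w = G (lift p w) (lift q w)) : r ∈ Y := by
  obtain ⟨Eqs, rfl⟩ := hY
  intro e he
  change lift r e.1 = lift r e.2
  rw [hG, hG, hp e he, hq e he]

section SqEqCube

variable {S : Type*} [Semigroup S] {a : S}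

theorem mul_eq_sq_of_mem_pair (hid : ∀ x : S, x * x = x * x * x) {u v : S}
    (hu : u = a ∨ u = a * a) (hv : v = a ∨ v = a * a) : u * v = a * a := by
  have hba : a * a * a = a * a := (hid a).symm
  rcases hu with rfl | rfl <;> rcases hv with rfl | rfl
  · rfl
  · rw [← mul_assoc, hba]
  · exact hba
  · rw [← mul_assoc, hba, hba]

theorem lift_of_mul_eq_sq (hid : ∀ x : S, x * x = x * x * x) {ι : Type*} {p : ι → S}
    (hp : ∀ i, p i = a ∨ p i = a * a) (i : ι) (w : FreeSemigroup ι) :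
    lift p (of i * w) = a * a := by
  induction w using FreeSemigroup.recOnMul generalizing i with
  | ih1 j => exact mul_eq_sq_of_mem_pair hid (hp i) (hp j)
  | ih2 j w _ ih => rw [lift_of_mul, ih j, mul_eq_sq_of_mem_pair hid (hp i) (Or.inr rfl)]

end SqEqCube

theorem not_algebraic_of_sq_eq_cube {S : Type*} [Semigroup S]
    (hid : ∀ x : S, x * x = x * x * x) (hnotband : ∃ a : S, a * a ≠ a) :
    ¬ IsAlgebraicSet {p : Fin 3 → S | p 0 = p 1 ∨ p 0 = p 2} := by
  classical
  obtain ⟨a, ha⟩ := hnotband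
  let p : Fin 3 → S := ![a, a, a * a]
  let q : Fin 3 → S := ![a, a * a, a]
  let r : Fin 3 → S := ![a, a * a, a * a]
  have hp : ∀ j, p j = a ∨ p j = a * a := by intro j; fin_cases j <;> simp [p]
  have hq : ∀ j, q j = a ∨ q j = a * a := by intro j; fin_cases j <;> simp [q]
  have hr : ∀ j, r j = a ∨ r j = a * a := by intro j; fin_cases j <;> simp [r]
  have hG : ∀ w, lift r w = if lift p w = lift q w then lift p w else a * a := by
    intro w
    induction w using FreeSemigroup.recOnMul with
    | ih1 i => fin_cases i <;> simp [p, q, r, ha, Ne.symm ha]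
    | ih2 i w =>
      simp only [lift_of_mul_eq_sq hid hp, lift_of_mul_eq_sq hid hq, lift_of_mul_eq_sq hid hr,
        ite_self]
  intro hM
  have hrM := hM.mem_of_lift_eq (p := p) (q := q) (Or.inl rfl) (Or.inr rfl)
    (fun u v => if u = v then u else a * a) hG
  rcases hrM with h | h <;> exact ha (by simpa [r] using h.symm)
end

section
/- Let S be a semigroup, let a ∈ S, and let τ and σ be terms in four variables x₁, x₂, x₃, x₄ over the language {·}. If the equation τ = σ is satisfied at both points P₁ = (a², a, a, a) and P₂ = (a, a, a², a) of S⁴, then it is also satisfied at the point Q = (a³, a², a³, a²). -/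
namespace FreeSemigroup

variable {α S : Type*} [Semigroup S]

theorem commute_lift {c : S} {p : α → S} (h : ∀ i, Commute c (p i)) (w : FreeSemigroup α) :
    Commute c (lift p w) := by
  induction w using FreeSemigroup.recOnMul with
  | ih1 i => simpa using h i
  | ih2 i v _ hv => simpa only [map_mul, lift_of] using (h i).mul_right hv

theorem lift_mul_of_commute {p q : α → S} (h : ∀ i j, Commute (q i) (p j))
    (w : FreeSemigroup α) : lift (p * q) w = lift p w * lift q w := by
  induction w using FreeSemigroup.recOnMul with
  | ih1 i => simp
  | ih2 i v _ hv =>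
    simp only [map_mul, lift_of, Pi.mul_apply, hv]
    rw [mul_assoc, ← mul_assoc (q i), (commute_lift (h i) v).eq, mul_assoc, mul_assoc]

end FreeSemigroup

theorem SatisfiesEquation.mul {S : Type*} [Semigroup S] {n : ℕ}
    {e : FreeSemigroup (Fin n) × FreeSemigroup (Fin n)} {p q : Fin n → S}
    (hcomm : ∀ i j, Commute (q i) (p j)) (hp : SatisfiesEquation e p)
    (hq : SatisfiesEquation e q) : SatisfiesEquation e (p * q) := by
  unfold SatisfiesEquation at *
  rw [FreeSemigroup.lift_mul_of_commute hcomm, FreeSemigroup.lift_mul_of_commute hcomm, hp, hq]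

theorem satisfies_at_Q_of_satisfies_at_P1_P2 {S : Type*} [Semigroup S] (a : S)
    (τ σ : FreeSemigroup (Fin 4))
    (h₁ : SatisfiesEquation (τ, σ) ![a * a, a, a, a])
    (h₂ : SatisfiesEquation (τ, σ) ![a, a, a * a, a]) :
    SatisfiesEquation (τ, σ) ![a * a * a, a * a, a * a * a, a * a] := by
  have hcomm : ∀ i j, Commute ((![a, a, a * a, a] : Fin 4 → S) i) (![a * a, a, a, a] j) := by
    intro i j
    fin_cases i <;> fin_cases j <;> simp [Commute, SemiconjBy, mul_assoc]
  have hQ : ![a * a, a, a, a] * ![a, a, a * a, a] = ![a * a * a, a * a, a * a * a, a * a] := by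
    funext i
    fin_cases i <;> simp [mul_assoc]
  exact hQ ▸ h₁.mul hcomm h₂
end
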